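/- Let p ∈ [1,∞) and suppose the equation −y′ + qy = f is correctly solvable in L_p(ℝ). Then ∫_{−∞}^∞ q(ξ) dξ = ∞. -/

import Mathlib

open MeasureTheory Filter Topology
open scoped ENNReal

/-- `y` is a solution of `-y' + q y = f` on `ℝ`: it is locally absolutely
continuous and its a.e. derivative `y'` equals `q y - f`. -/
def IsSolution (q f y : ℝ → ℝ) : Prop :=
  LocallyIntegrable (fun t => q t * y t - f t) volume ∧
  ∀ a b : ℝ, y b - y a = ∫ t in a..b, (q t * y t - f t)

/-- The equation `-y' + q y = f` is correctly solvable in `L_p(ℝ)`. -/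
def CorrectlySolvableLp (q : ℝ → ℝ) (p : ℝ≥0∞) : Prop :=
  ∃ c : ℝ, 0 < c ∧ ∀ f : ℝ → ℝ, MemLp f p volume →
    (∃! y : ℝ → ℝ, IsSolution q f y ∧ MemLp y p volume) ∧
    ∀ y : ℝ → ℝ, IsSolution q f y → MemLp y p volume →
      eLpNorm y p volume ≤ ENNReal.ofReal c * eLpNorm f p volume

/-!
If `∫ q < ∞`, pick `c` with `∫_{-∞}^c q ≤ 1/4` and solve with `f = 𝟙_(c-1, c] ≥ 0`.
If `y c < 0`, then `y' = q y - f ≤ 0` as long as `y ≤ 0`, so `y ≤ y c` on `[c, ∞)`.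
If `y c ≥ 0`, integrating backwards from `c`, the term `∫ q y` is at most a quarter of
`sup |y|`, which forces `y ≥ 2/3` on `(-∞, c - 1]`. Either way `y ∉ L_p`.
-/

open Set

theorem MeasureTheory.MemLp.measure_lt_top_of_le_norm {α E : Type*} [MeasurableSpace α]
    {μ : Measure α} [NormedAddCommGroup E] {g : α → E} {p : ℝ≥0∞} (hg : MemLp g p μ)
    (hp0 : p ≠ 0) (hp : p ≠ ∞) {s : Set α} {ε : ℝ} (hε : 0 < ε)
    (hs : ∀ x ∈ s, ε ≤ ‖g x‖) : μ s < ∞ := by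
  refine (measure_mono fun x hx => ?_).trans_lt
    (hg.meas_ge_lt_top'_enorm hp0 hp (ENNReal.ofReal_pos.2 hε).ne' (by simp))
  rw [mem_ofPred_eq, ← ofReal_norm]
  exact ENNReal.ofReal_le_ofReal (hs x hx)

theorem MeasureTheory.LocallyIntegrable.intervalIntegrable {E : Type*} [NormedAddCommGroup E]
    {μ : Measure ℝ} {g : ℝ → E} (hg : LocallyIntegrable g μ) (a b : ℝ) :
    IntervalIntegrable g μ a b :=
  (hg.integrableOn_isCompact isCompact_uIcc).intervalIntegrable

theorem intervalIntegral_indicator_Ioc_one {a b c d : ℝ} (hac : a ≤ c) (hcd : c ≤ d)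
    (hdb : d ≤ b) : ∫ t in a..b, (Ioc c d).indicator (fun _ => (1 : ℝ)) t = d - c := by
  rw [intervalIntegral.integral_of_le (hac.trans (hcd.trans hdb)),
    setIntegral_indicator measurableSet_Ioc, inter_eq_right.2 (Ioc_subset_Ioc hac hdb)]
  simp [hcd]

theorem abs_intervalIntegral_mul_le {μ : Measure ℝ} {q y : ℝ → ℝ} {a b M : ℝ} (hab : a ≤ b)
    (hq : ∀ t, 0 ≤ q t) (hqi : IntervalIntegrable q μ a b)
    (hM : ∀ t ∈ Icc a b, |y t| ≤ M) :
    |∫ t in a..b, q t * y t ∂μ| ≤ M * ∫ t in a..b, q t ∂μ := by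
  rw [← intervalIntegral.integral_const_mul M q, ← Real.norm_eq_abs]
  refine intervalIntegral.norm_integral_le_of_norm_le hab (ae_of_all _ fun t ht => ?_)
    (hqi.const_mul M)
  rw [Real.norm_eq_abs, abs_mul, abs_of_nonneg (hq t), mul_comm]
  exact mul_le_mul_of_nonneg_right (hM t (Ioc_subset_Icc_self ht)) (hq t)

theorem exists_forall_intervalIntegral_le {μ : Measure ℝ} {q : ℝ → ℝ} (hq : ∀ t, 0 ≤ q t)
    (hqint : Integrable q μ) {ε : ℝ} (hε : 0 < ε) :
    ∃ c, ∀ a ≤ c, ∫ t in a..c, q t ∂μ ≤ ε := by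
  obtain ⟨c, hc⟩ := ((tendsto_integral_Iic_zero (μ := μ) (f := q)
    tendsto_id).eventually (ge_mem_nhds hε)).exists
  refine ⟨c, fun a hac => ?_⟩
  rw [intervalIntegral.integral_of_le hac]
  exact (setIntegral_mono_set hqint.integrableOn (ae_of_all _ hq)
    Ioc_subset_Iic_self.eventuallyLE).trans hc

namespace IsSolution

variable {q f y : ℝ → ℝ}

theorem continuous (h : IsSolution q f y) : Continuous y := by
  have hprim : Continuous fun x => y 0 + ∫ t in (0 : ℝ)..x, (q t * y t - f t) :=
    continuous_const.add (intervalIntegral.continuous_primitive h.1.intervalIntegrable 0)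
  exact hprim.congr fun x => by linarith [h.2 0 x]

theorem sub_eq (h : IsSolution q f y) (hf : LocallyIntegrable f volume) (a b : ℝ) :
    y b - y a = (∫ t in a..b, q t * y t) - ∫ t in a..b, f t := by
  have hqy : IntervalIntegrable (fun t => q t * y t) volume a b := by
    simpa using (h.1.intervalIntegrable a b).add (hf.intervalIntegrable a b)
  rw [h.2, intervalIntegral.integral_sub hqy (hf.intervalIntegrable a b)]

theorem le_of_neg_of_le (h : IsSolution q f y) (hq : ∀ t, 0 ≤ q t) (hf : ∀ t, 0 ≤ f t) {c : ℝ}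
    (hc : y c < 0) {x : ℝ} (hx : c ≤ x) : y x ≤ y c := by
  have decreasing : ∀ x, c ≤ x → (∀ t ∈ Ico c x, y t ≤ 0) → y x ≤ y c := by
    intro x hx hneg
    have : ∫ t in c..x, (q t * y t - f t) ≤ ∫ t in c..x, (0 : ℝ) :=
      intervalIntegral.integral_mono_on_of_le_Ioo hx (h.1.intervalIntegrable c x)
        intervalIntegrable_const fun t ht => by
          nlinarith [hq t, hf t, hneg t (Ioo_subset_Ico_self ht)]
    rw [intervalIntegral.integral_zero] at this
    linarith [h.2 c x]
  have negative : ∀ t, c ≤ t → y t < 0 := by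
    by_contra! ⟨t, hct, hyt⟩
    set Z := Icc c t ∩ {u | 0 ≤ y u}
    have hZ : IsClosed Z := isClosed_Icc.inter (isClosed_le continuous_const h.continuous)
    have hbdd : BddBelow Z := ⟨c, fun u hu => hu.1.1⟩
    have hs : sInf Z ∈ Z := hZ.csInf_mem ⟨t, ⟨hct, le_rfl⟩, hyt⟩ hbdd
    have hbefore : ∀ u ∈ Ico c (sInf Z), y u ≤ 0 := fun u hu =>
      le_of_not_ge fun hyu => (csInf_le hbdd ⟨⟨hu.1, hu.2.le.trans hs.1.2⟩, hyu⟩).not_gt hu.2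
    have hys : 0 ≤ y (sInf Z) := hs.2
    linarith [decreasing _ hs.1.1 hbefore]
  exact decreasing x hx fun t ht => (negative t ht.1).le

theorem two_thirds_mul_le (h : IsSolution q f y) (hq : ∀ t, 0 ≤ q t)
    (hqloc : LocallyIntegrable q volume) (hf : ∀ t, 0 ≤ f t)
    (hfloc : LocallyIntegrable f volume) {a b : ℝ} (hab : a ≤ b)
    (hqab : ∫ t in a..b, q t ≤ 1 / 4) (hyb : 0 ≤ y b) :
    2 / 3 * (y b + ∫ t in a..b, f t) ≤ y a := by
  obtain ⟨z, hz, hmax⟩ := isCompact_Icc.exists_isMaxOn (nonempty_Icc.2 hab)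
    (continuous_abs.comp h.continuous).continuousOn
  set M := |y z|
  have hM : ∀ t ∈ Icc a b, |y t| ≤ M := fun t ht => hmax ht
  have hM0 : 0 ≤ M := abs_nonneg _
  have hqy : ∀ t ∈ Icc a b, |∫ s in t..b, q s * y s| ≤ M / 4 := fun t ht =>
    calc |∫ s in t..b, q s * y s| ≤ M * ∫ s in t..b, q s :=
          abs_intervalIntegral_mul_le ht.2 hq (hqloc.intervalIntegrable t b)
            fun s hs => hM s ⟨ht.1.trans hs.1, hs.2⟩
      _ ≤ M * ∫ s in a..b, q s := by
          gcongr
          exact intervalIntegral.integral_mono_interval ht.1 ht.2 le_rfl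
            (ae_of_all _ hq) (hqloc.intervalIntegrable a b)
      _ ≤ M / 4 := by nlinarith
  have hfz : ∫ s in z..b, f s ≤ ∫ s in a..b, f s :=
    intervalIntegral.integral_mono_interval hz.1 hz.2 le_rfl (ae_of_all _ hf)
      (hfloc.intervalIntegrable a b)
  have hfz0 : 0 ≤ ∫ s in z..b, f s := intervalIntegral.integral_nonneg hz.2 fun s _ => hf s
  have hMle : M ≤ 4 / 3 * (y b + ∫ s in a..b, f s) := by
    have hyz := h.sub_eq hfloc z b
    have := abs_le.1 (hqy z hz)
    cases abs_cases (y z) <;> linarith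
  have hya := h.sub_eq hfloc a b
  linarith [(abs_le.1 (hqy a ⟨le_rfl, hab⟩)).2]

end IsSolution

theorem stmt6 (q : ℝ → ℝ) (hq : ∀ x, 0 ≤ q x)
    (hqloc : LocallyIntegrable q volume)
    (p : ℝ≥0∞) (hp : 1 ≤ p) (hptop : p ≠ ∞)
    (hsolv : CorrectlySolvableLp q p) :
    ∫⁻ x : ℝ, ENNReal.ofReal (q x) = ⊤ := by
  by_contra hfin
  have hqint : Integrable q volume :=
    (lintegral_ofReal_ne_top_iff_integrable hqloc.aestronglyMeasurable (ae_of_all _ hq)).1 hfin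
  obtain ⟨c, hc⟩ := exists_forall_intervalIntegral_le hq hqint (by norm_num : (0 : ℝ) < 1 / 4)
  set f := (Ioc (c - 1) c).indicator fun _ => (1 : ℝ)
  have hf : ∀ t, 0 ≤ f t := fun t => indicator_nonneg (fun _ _ => zero_le_one) t
  have hfloc : LocallyIntegrable f volume :=
    (locallyIntegrable_const 1).indicator measurableSet_Ioc
  have hfLp : MemLp f p volume :=
    memLp_indicator_const p measurableSet_Ioc 1 (Or.inr (by simp [Real.volume_Ioc]))
  obtain ⟨C, -, hC⟩ := hsolv
  obtain ⟨⟨y, ⟨hy, hyLp⟩, -⟩, -⟩ := hC f hfLp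
  have hp0 : p ≠ 0 := (zero_lt_one.trans_le hp).ne'
  rcases lt_or_ge (y c) 0 with hyc | hyc
  · refine (hyLp.measure_lt_top_of_le_norm hp0 hptop (neg_pos.2 hyc) (s := Ici c)
      fun x hx => ?_).ne (by simp)
    have := hy.le_of_neg_of_le hq hf hyc hx
    rw [Real.norm_eq_abs]
    exact (neg_le_neg this).trans (neg_le_abs _)
  · refine (hyLp.measure_lt_top_of_le_norm hp0 hptop (by norm_num : (0 : ℝ) < 2 / 3)
      (s := Iic (c - 1)) fun x hx => ?_).ne (by simp)
    have hxc : x ≤ c := by linarith [mem_Iic.1 hx]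
    have hfx : ∫ t in x..c, f t = 1 := by
      rw [intervalIntegral_indicator_Ioc_one hx (by linarith) le_rfl]; ring
    have := hy.two_thirds_mul_le hq hqloc hf hfloc hxc (hc x hxc) hyc
    rw [hfx] at this
    rw [Real.norm_eq_abs]
    linarith [le_abs_self (y x)]
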